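/- If a graph G is γ-q-critical, then for any minimum dominating set D of G and every vertex v not in D, the number of neighbours of v in D is at most q. -/

import Mathlib

open SimpleGraph

/-- `D` is a dominating set of `G`. -/
def SimpleGraph.IsDomSet {V : Type*} (G : SimpleGraph V) (D : Set V) : Prop :=
  ∀ v ∉ D, ∃ u ∈ D, G.Adj u v

/-- The domination number of `G`. -/
noncomputable def SimpleGraph.domNum {V : Type*} [Fintype V] (G : SimpleGraph V) : ℕ :=
  sInf {k | ∃ D : Finset V, D.card = k ∧ G.IsDomSet ↑D}

/-- The graph obtained from `G` by subdividing each edge in `F` once: each `e ∈ F`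
contributes a new vertex adjacent to the two endpoints of `e`, and the edges of `F`
are removed. -/
def SimpleGraph.subdiv {V : Type*} (G : SimpleGraph V) (F : Finset (Sym2 V)) :
    SimpleGraph (V ⊕ {e : Sym2 V // e ∈ F}) :=
  SimpleGraph.fromRel (fun a b => match a, b with
    | Sum.inl u, Sum.inl v => G.Adj u v ∧ s(u, v) ∉ F
    | Sum.inl u, Sum.inr e => u ∈ (e : Sym2 V)
    | _, _ => False)

/-- `G` is `γ`-`q`-critical: subdividing any `q` edges increases the domination number,
while some set of `q - 1` edges can be subdivided without increasing it. -/
def SimpleGraph.IsQCritical {V : Type*} [Fintype V] (G : SimpleGraph V) (q : ℕ) : Prop :=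
  (∀ F : Finset (Sym2 V), ↑F ⊆ G.edgeSet → F.card = q →
      G.domNum < (G.subdiv F).domNum) ∧
  (∃ F : Finset (Sym2 V), ↑F ⊆ G.edgeSet ∧ F.card = q - 1 ∧
      (G.subdiv F).domNum = G.domNum)

/-! If `v` had more than `q` neighbours in `D`, subdivide the edges from `v` to `q` of them.
Every new vertex is adjacent to a vertex of `D`, and `v` keeps an unsubdivided edge to `D`, so
`D` still dominates the subdivided graph and the domination number does not increase,
contradicting criticality. -/

open Finset

namespace SimpleGraph

variable {V : Type*} {G : SimpleGraph V}

theorem domNum_le_card [Fintype V] {D : Finset V} (hD : G.IsDomSet ↑D) : G.domNum ≤ #D :=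
  Nat.sInf_le ⟨D, rfl, hD⟩

@[simp]
theorem subdiv_adj_inl_inl {F : Finset (Sym2 V)} {u w : V} :
    (G.subdiv F).Adj (.inl u) (.inl w) ↔ G.Adj u w ∧ s(u, w) ∉ F := by
  simp only [subdiv, fromRel_adj, ne_eq, Sum.inl.injEq]
  constructor
  · rintro ⟨-, h | ⟨hadj, hF⟩⟩
    · exact h
    · exact ⟨hadj.symm, Sym2.eq_swap ▸ hF⟩
  · intro h
    exact ⟨h.1.ne, .inl h⟩

@[simp]
theorem subdiv_adj_inl_inr {F : Finset (Sym2 V)} {u : V} {e : {e : Sym2 V // e ∈ F}} :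
    (G.subdiv F).Adj (.inl u) (.inr e) ↔ u ∈ (e : Sym2 V) := by
  simp [subdiv, fromRel_adj]

theorem isDomSet_subdiv_image_inl {F : Finset (Sym2 V)} {D : Set V}
    (hF : ∀ e ∈ F, ∃ u ∈ D, u ∈ e) (hD : ∀ w ∉ D, ∃ u ∈ D, G.Adj u w ∧ s(u, w) ∉ F) :
    (G.subdiv F).IsDomSet (Sum.inl '' D) := by
  rintro (w | e) hx
  · have hw : w ∉ D := fun h => hx ⟨w, h, rfl⟩
    obtain ⟨u, huD, hadj, huw⟩ := hD w hw
    exact ⟨.inl u, ⟨u, huD, rfl⟩, subdiv_adj_inl_inl.2 ⟨hadj, huw⟩⟩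
  · obtain ⟨u, huD, hue⟩ := hF e.1 e.2
    exact ⟨.inl u, ⟨u, huD, rfl⟩, subdiv_adj_inl_inr.2 hue⟩

theorem isDomSet_subdiv_star [DecidableEq V] {D S : Finset V} {u v : V} (hD : G.IsDomSet ↑D)
    (hv : v ∉ D) (hSD : S ⊆ D) (huD : u ∈ D) (huS : u ∉ S) (huv : G.Adj u v) :
    (G.subdiv (S.image (s(·, v)))).IsDomSet (Sum.inl '' ↑D) := by
  refine isDomSet_subdiv_image_inl ?_ fun w hw => ?_
  · intro e he
    obtain ⟨x, hx, rfl⟩ := mem_image.1 he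
    exact ⟨x, hSD hx, Sym2.mem_mk_left x v⟩
  have hsubdivided : ∀ x ∈ D, s(x, w) ∈ S.image (s(·, v)) → x ∈ S ∧ w = v := by
    intro x hx hxw
    obtain ⟨y, hy, hyx⟩ := mem_image.1 hxw
    rcases Sym2.eq_iff.1 hyx with ⟨rfl, rfl⟩ | ⟨-, rfl⟩
    · exact ⟨hy, rfl⟩
    · exact absurd hx hv
  by_cases hwv : w = v
  · subst hwv
    exact ⟨u, huD, huv, fun h => huS (hsubdivided u huD h).1⟩
  · obtain ⟨x, hx, hadj⟩ := hD w hw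
    exact ⟨x, hx, hadj, fun h => hwv (hsubdivided x hx h).2⟩

end SimpleGraph

theorem stmt3 {V : Type*} [Fintype V] (G : SimpleGraph V) [DecidableRel G.Adj]
    (q : ℕ) (h : G.IsQCritical q) (D : Finset V) (hD : G.IsDomSet ↑D)
    (hcard : D.card = G.domNum) (v : V) (hv : v ∉ D) :
    (D.filter (fun u => G.Adj u v)).card ≤ q := by
  classical
  by_contra! hgt
  obtain ⟨S, hSN, hScard⟩ := exists_subset_card_eq hgt.le
  obtain ⟨u, huN, huS⟩ := not_subset.1 fun hNS => (card_le_card hNS).not_gt (hScard ▸ hgt)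
  obtain ⟨huD, huv⟩ := mem_filter.1 huN
  have hSD : S ⊆ D := hSN.trans (filter_subset _ _)
  have hF : ↑(S.image (s(·, v))) ⊆ G.edgeSet := by
    simp only [coe_image, Set.image_subset_iff]
    exact fun x hx => (mem_filter.1 (hSN hx)).2
  have hFcard : #(S.image (s(·, v))) = q := by
    rw [card_image_of_injective _ fun _ _ => Sym2.congr_left.1, hScard]
  have hlt := h.1 _ hF hFcard
  have hdom := isDomSet_subdiv_star hD hv hSD huD huS huv
  rw [← coe_image] at hdom
  have hle := domNum_le_card hdom
  rw [card_image_of_injective _ Sum.inl_injective] at hle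
  omega
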